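/- arXiv:2401.10027 — 2 statements merged into one kernel-verified Lean document; each statement's English description precedes it below -/
import Mathlib

section
/- A modified ascent sequence avoids the pattern 213 if and only if it avoids the pattern 1213, and a modified ascent sequence avoids the pattern 312 if and only if it avoids the pattern 1312; that is, Modasc(213) = Modasc(1213) and Modasc(312) = Modasc(1312). -/
/-- A Cayley permutation of length `n`: a word whose set of values is `{1, …, k}`
for some `k ≤ n`. -/
def IsCayley {n : ℕ} (x : Fin n → ℕ) : Prop :=
  ∃ k, k ≤ n ∧ Set.range x = Set.Icc 1 k

/-- Ascent tops of `x`: indices `i` with `i = 0` or `x (i-1) < x i`. -/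
def AscTops {n : ℕ} (x : Fin n → ℕ) : Set (Fin n) :=
  {i | ∀ j : Fin n, (j : ℕ) + 1 = (i : ℕ) → x j < x i}

/-- Leftmost copies of `x`: indices `i` such that the value `x i` does not occur earlier. -/
def Nub {n : ℕ} (x : Fin n → ℕ) : Set (Fin n) :=
  {i | ∀ j : Fin n, j < i → x j ≠ x i}

/-- A modified ascent sequence: a Cayley permutation whose ascent tops
are exactly its leftmost copies. -/
def IsModasc {n : ℕ} (x : Fin n → ℕ) : Prop :=
  IsCayley x ∧ AscTops x = Nub x

/-- `x` has no flat steps (no two consecutive equal entries). -/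
def NoFlat {n : ℕ} (x : Fin n → ℕ) : Prop :=
  ∀ i j : Fin n, (j : ℕ) = (i : ℕ) + 1 → x i ≠ x j

/-- A primitive modified ascent sequence. -/
def IsPrim {n : ℕ} (x : Fin n → ℕ) : Prop :=
  IsModasc x ∧ NoFlat x

/-- The word `x` contains the pattern `y`. -/
def Contains {n k : ℕ} (x : Fin n → ℕ) (y : Fin k → ℕ) : Prop :=
  ∃ f : Fin k → Fin n, StrictMono f ∧ ∀ s t, y s < y t ↔ x (f s) < x (f t)

/-- The word `x` avoids the pattern `y`. -/
def Avoids {n k : ℕ} (x : Fin n → ℕ) (y : Fin k → ℕ) : Prop :=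
  ¬ Contains x y

/-- Standardization: `(Std x) i = #{j : x j < x i} + #{j ≤ i : x j = x i}`. -/
def Std {n : ℕ} (x : Fin n → ℕ) : Fin n → ℕ :=
  fun i => (Finset.univ.filter fun j => x j < x i).card +
    (Finset.univ.filter fun j => j ≤ i ∧ x j = x i).card

/-- `p` is a permutation of `{1, …, n}` (written as a word). -/
def IsPerm {n : ℕ} (p : Fin n → ℕ) : Prop :=
  Function.Injective p ∧ Set.range p = Set.Icc 1 n

/-- `p` contains the bivincular pattern `ω = (321, {1}, {1})`:
there are `i` and `j` with `i + 1 < j`, `p i > p (i+1)` and `p (i+1) = p j + 1`. -/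
def ContainsOmega {n : ℕ} (p : Fin n → ℕ) : Prop :=
  ∃ (i j : Fin n) (hi : (i : ℕ) + 1 < n),
    (i : ℕ) + 1 < (j : ℕ) ∧ p ⟨(i : ℕ) + 1, hi⟩ < p i ∧ p ⟨(i : ℕ) + 1, hi⟩ = p j + 1

/-- Membership in `Ω_n`: a permutation of `{1, …, n}` whose first entry is `1`
and which avoids the bivincular pattern `ω`. -/
def InOmega {n : ℕ} (p : Fin n → ℕ) : Prop :=
  IsPerm p ∧ (∀ h : 0 < n, p ⟨0, h⟩ = 1) ∧ ¬ ContainsOmega p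

/-!
In a modified ascent sequence every leftmost copy is an ascent top. Given `i < j₀` with
`x j₀ < x i`, walk left from `j₀`: if `x j₀` occurred earlier, at `q`, stop if `q < i` and
otherwise continue from `q`; if not, `j₀` is an ascent top and we continue from `j₀ - 1`, whose
value is smaller. Values never increase along the walk, so it never reaches `i`, and it ends with
`p < i < j ≤ j₀` and `x p = x j ≤ x j₀`. In an occurrence of `213` or `312` whose `1` sits at
`j₀`, moving the `1` to `j` and prepending `p` gives an occurrence of `1213` or `1312`; the
converse is just dropping the first letter.
-/

theorem exists_eq_of_lt_of_nub_subset {n : ℕ} {x : Fin n → ℕ} (hx : Nub x ⊆ AscTops x)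
    {i j₀ : Fin n} (hij : i < j₀) (hxj : x j₀ < x i) :
    ∃ p j, p < i ∧ i < j ∧ j ≤ j₀ ∧ x p = x j ∧ x j ≤ x j₀ := by
  induction j₀ using WellFoundedLT.induction with
  | _ j₀ ih =>
  by_cases hnub : ∀ q < j₀, x q ≠ x j₀
  · let q : Fin n := ⟨j₀ - 1, by omega⟩
    have hq : (q : ℕ) + 1 = j₀ := by simp only [q]; omega
    have hqj : q < j₀ := Fin.lt_def.mpr (by omega)
    have hxq : x q < x j₀ := hx hnub q hq
    have hiq : i < q :=
      lt_of_le_of_ne (Fin.le_def.mpr (by omega)) fun h => lt_asymm hxq (h ▸ hxj)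
    obtain ⟨p, j, hpi, hij', hjq, hxpj, hxjq⟩ := ih q hqj hiq (hxq.trans hxj)
    exact ⟨p, j, hpi, hij', hjq.trans hqj.le, hxpj, hxjq.trans hxq.le⟩
  · simp only [not_forall, not_not] at hnub
    obtain ⟨q, hqj, hxq⟩ := hnub
    rcases lt_trichotomy q i with hqi | rfl | hiq
    · exact ⟨q, j₀, hqi, hij, le_rfl, hxq, le_rfl⟩
    · exact absurd hxq hxj.ne'
    · obtain ⟨p, j, hpi, hij', hjq, hxpj, hxjq⟩ := ih q hqj hiq (hxq ▸ hxj)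
      exact ⟨p, j, hpi, hij', hjq.trans hqj.le, hxpj, hxq ▸ hxjq⟩

theorem Contains.of_vecCons {n k : ℕ} {x : Fin n → ℕ} {a : ℕ} {y : Fin k → ℕ}
    (h : Contains x (Matrix.vecCons a y)) : Contains x y :=
  let ⟨f, hf, hc⟩ := h
  ⟨f ∘ Fin.succ, hf.comp Fin.strictMono_succ, fun s t => hc s.succ t.succ⟩

theorem Contains.vecCons_of_nub_subset {n : ℕ} {x : Fin n → ℕ} (hx : Nub x ⊆ AscTops x)
    {a b c : ℕ} (hba : b < a) (hbc : b < c) (h : Contains x ![a, b, c]) :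
    Contains x ![b, a, b, c] := by
  obtain ⟨f, hf, hc⟩ := h
  have hx₀ : x (f 1) < x (f 0) := (hc 1 0).mp hba
  have hx₂ : x (f 1) < x (f 2) := (hc 1 2).mp hbc
  obtain ⟨p, j, hpi, hij, hjf, hxpj, hxj⟩ :=
    exists_eq_of_lt_of_nub_subset hx (hf (show (0 : Fin 3) < 1 by decide)) hx₀
  have hac : a < c ↔ x (f 0) < x (f 2) := hc 0 2
  have hca : c < a ↔ x (f 2) < x (f 0) := hc 2 0
  have hjk : j < f 2 := hjf.trans_lt (hf (show (1 : Fin 3) < 2 by decide))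
  refine ⟨![p, f 0, j, f 2], by simp [hpi, hij, hjk], ?_⟩
  intro s t
  fin_cases s <;> fin_cases t <;>
    simp only [Fin.zero_eta, Fin.mk_one, Fin.isValue, Fin.reduceFinMk, Matrix.cons_val_zero,
      Matrix.cons_val_one, Matrix.cons_val] <;>
    omega

theorem avoids_iff_avoids_vecCons_of_nub_subset {n : ℕ} {x : Fin n → ℕ}
    (hx : Nub x ⊆ AscTops x) {a b c : ℕ} (hba : b < a) (hbc : b < c) :
    Avoids x ![a, b, c] ↔ Avoids x ![b, a, b, c] :=
  not_congr ⟨Contains.vecCons_of_nub_subset hx hba hbc, Contains.of_vecCons⟩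

/-- `Modasc(213) = Modasc(1213)` and `Modasc(312) = Modasc(1312)`. -/
theorem modasc_213_1213_312_1312 (n : ℕ) :
    ({x : Fin n → ℕ | IsModasc x ∧ Avoids x ![2, 1, 3]} =
      {x : Fin n → ℕ | IsModasc x ∧ Avoids x ![1, 2, 1, 3]}) ∧
    ({x : Fin n → ℕ | IsModasc x ∧ Avoids x ![3, 1, 2]} =
      {x : Fin n → ℕ | IsModasc x ∧ Avoids x ![1, 3, 1, 2]}) :=
  ⟨Set.ext fun _ => and_congr_right fun hx =>
      avoids_iff_avoids_vecCons_of_nub_subset hx.2.ge (by norm_num) (by norm_num),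
    Set.ext fun _ => and_congr_right fun hx =>
      avoids_iff_avoids_vecCons_of_nub_subset hx.2.ge (by norm_num) (by norm_num)⟩
end

section
/- For every n ≥ 0: (i) a primitive modified ascent sequence of length n avoids the pattern 221 if and only if it avoids the pattern 2321, i.e. Prim_n(221) = Prim_n(2321); and (ii) the image under standardization of the set of primitive modified ascent sequences of length n avoiding 221 equals the set of permutations p of {1,…,n} with p_1 = 1 that avoid the vincular pattern 32-1, where p contains 32-1 if there exist indices i and k with i + 1 < k and p_i > p_{i+1} > p_k. -/
/-- `p` contains the vincular pattern `32-1`: there are `i` and `k` with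
`i + 1 < k` and `p i > p (i+1) > p k`. -/
def Contains32Dash1 {n : ℕ} (p : Fin n → ℕ) : Prop :=
  ∃ (i k : Fin n) (hi : (i : ℕ) + 1 < n),
    (i : ℕ) + 1 < (k : ℕ) ∧ p ⟨(i : ℕ) + 1, hi⟩ < p i ∧ p k < p ⟨(i : ℕ) + 1, hi⟩

/-!
Part (i): in a primitive modified ascent sequence a repeated letter is not a leftmost copy, hence
not an ascent top, and since there are no flat steps its left neighbour is strictly larger; this
turns every `221` into a `2321`.

Part (ii): `Std x` ranks the positions by the lexicographic order on `(x i, i)`. A descent of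
`Std x` is a strict descent of `x`; its bottom is not an ascent top, so it repeats an earlier letter,
and a `32-1` in `Std x` yields a `221` in `x`. Conversely, for `p` in the target set, glue each
value `a` to `a + 1` when `a` occurs before `a + 1` and `a + 1` is a descent bottom of `p`, and let
`collapse p` send each value to the index of its run of glued values. The values of a run occur
from left to right with gaps, so `Std (collapse p) = p` and `collapse p` has no flat steps.
Avoiding `32-1` forces `a` to occur before `a + 1` whenever `a + 1` is a descent bottom; this makes
the ascent tops of `collapse p` its leftmost copies and excludes `221`.
-/

open Finset

section Standardization

variable {n : ℕ}

lemma std_eq_card_lex (x : Fin n → ℕ) (i : Fin n) :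
    Std x i = #{j | toLex (x j, j) ≤ toLex (x i, i)} := by
  rw [Std, ← card_union_of_disjoint]
  · congr 1
    ext j
    simp [Prod.Lex.toLex_le_toLex, and_comm]
  · rw [disjoint_filter]
    intro j _ h1 h2
    omega

lemma std_lt_std_of_lex_lt (x : Fin n → ℕ) {i j : Fin n}
    (h : toLex (x j, j) < toLex (x i, i)) : Std x j < Std x i := by
  rw [std_eq_card_lex, std_eq_card_lex]
  refine card_lt_card ⟨fun k hk => ?_, fun hsub => ?_⟩
  · simp only [mem_filter, mem_univ, true_and] at hk ⊢
    exact hk.trans h.le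
  · have := hsub (mem_filter.2 ⟨mem_univ i, le_rfl⟩)
    exact not_le.2 h (mem_filter.1 this).2

lemma std_lt_std_iff (x : Fin n → ℕ) {i j : Fin n} :
    Std x j < Std x i ↔ toLex (x j, j) < toLex (x i, i) := by
  refine ⟨fun h => ?_, std_lt_std_of_lex_lt x⟩
  rcases lt_trichotomy (toLex (x j, j)) (toLex (x i, i)) with hlt | heq | hgt
  · exact hlt
  · obtain rfl : j = i := congrArg Prod.snd (toLex.injective heq)
    exact absurd h (lt_irrefl _)
  · exact absurd (std_lt_std_of_lex_lt x hgt) h.not_gt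

lemma std_injective (x : Fin n → ℕ) : Function.Injective (Std x) := by
  intro i j h
  by_contra hne
  have hkey : toLex (x i, i) ≠ toLex (x j, j) := fun h' =>
    hne (congrArg Prod.snd (toLex.injective h'))
  rcases hkey.lt_or_gt with hlt | hgt
  · exact (std_lt_std_of_lex_lt x hlt).ne h
  · exact (std_lt_std_of_lex_lt x hgt).ne' h

lemma isPerm_std (x : Fin n → ℕ) : IsPerm (Std x) := by
  refine ⟨std_injective x, ?_⟩
  have hsub : univ.image (Std x) ⊆ Icc 1 n := by
    intro v hv
    obtain ⟨i, -, rfl⟩ := mem_image.1 hv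
    rw [mem_Icc, std_eq_card_lex]
    exact ⟨card_pos.2 ⟨i, by simp⟩, (card_le_univ _).trans (by simp)⟩
  have himage := eq_of_subset_of_card_le hsub (by simp [card_image_of_injective _ (std_injective x)])
  simpa [Set.image_univ] using congrArg (fun s : Finset ℕ => (s : Set ℕ)) himage

namespace IsPerm

variable {p : Fin n → ℕ}

lemma apply_mem_Icc (hp : IsPerm p) (i : Fin n) : p i ∈ Set.Icc 1 n :=
  hp.2 ▸ Set.mem_range_self i

lemma exists_eq (hp : IsPerm p) {v : ℕ} (h1 : 1 ≤ v) (h2 : v ≤ n) : ∃ i, p i = v := by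
  rw [← Set.mem_range, hp.2]
  exact ⟨h1, h2⟩

lemma card_filter_le (hp : IsPerm p) (i : Fin n) : #{j | p j ≤ p i} = p i := by
  have himage : image p {j | p j ≤ p i} = Icc 1 (p i) := by
    ext v
    simp only [mem_image, mem_filter, mem_univ, true_and, Finset.mem_Icc]
    constructor
    · rintro ⟨j, hj, rfl⟩
      exact ⟨(hp.apply_mem_Icc j).1, hj⟩
    · rintro ⟨h1, h2⟩
      obtain ⟨j, rfl⟩ := hp.exists_eq h1 (h2.trans (hp.apply_mem_Icc i).2)
      exact ⟨j, h2, rfl⟩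
  rw [← card_image_of_injective _ hp.1, himage, Nat.card_Icc, Nat.add_sub_cancel]

end IsPerm

lemma std_eq_of_lt_iff {x p : Fin n → ℕ} (hp : IsPerm p)
    (h : ∀ i j, p j < p i ↔ toLex (x j, j) < toLex (x i, i)) : Std x = p := by
  funext i
  rw [std_eq_card_lex, ← hp.card_filter_le i]
  congr 1
  ext j
  simp only [mem_filter, mem_univ, true_and]
  rw [← not_lt, ← not_lt, h j i]

end Standardization

section Patterns

variable {n : ℕ} {x : Fin n → ℕ}

lemma contains_221_iff :
    Contains x ![2, 2, 1] ↔ ∃ a b c, a < b ∧ b < c ∧ x a = x b ∧ x c < x b := by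
  constructor
  · rintro ⟨f, hf, hpat⟩
    refine ⟨f 0, f 1, f 2, hf (by decide), hf (by decide), ?_, (hpat 2 1).1 (by decide)⟩
    have h01 := (hpat 0 1).not.1 (by decide)
    have h10 := (hpat 1 0).not.1 (by decide)
    omega
  · rintro ⟨a, b, c, hab, hbc, hxab, hxcb⟩
    refine ⟨![a, b, c], ?_, fun s t => ?_⟩
    · rw [Fin.strictMono_iff_lt_succ]
      intro i
      fin_cases i <;> simpa
    · fin_cases s <;> fin_cases t <;> simp <;> omega

lemma contains_2321_iff :
    Contains x ![2, 3, 2, 1] ↔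
      ∃ a b c d, a < b ∧ b < c ∧ c < d ∧ x a = x c ∧ x a < x b ∧ x d < x a := by
  constructor
  · rintro ⟨f, hf, hpat⟩
    refine ⟨f 0, f 1, f 2, f 3, hf (by decide), hf (by decide), hf (by decide), ?_,
      (hpat 0 1).1 (by decide), (hpat 3 0).1 (by decide)⟩
    have h02 := (hpat 0 2).not.1 (by decide)
    have h20 := (hpat 2 0).not.1 (by decide)
    omega
  · rintro ⟨a, b, c, d, hab, hbc, hcd, hxac, hxab, hxda⟩
    refine ⟨![a, b, c, d], ?_, fun s t => ?_⟩
    · rw [Fin.strictMono_iff_lt_succ]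
      intro i
      fin_cases i <;> simpa
    · fin_cases s <;> fin_cases t <;> simp <;> omega

lemma contains32Dash1_of {j i k : Fin n} (hji : (j : ℕ) + 1 = i) (hik : i < k)
    (hij : x i < x j) (hki : x k < x i) : Contains32Dash1 x := by
  obtain ⟨i, hi⟩ := i
  obtain rfl : (j : ℕ) + 1 = i := hji
  exact ⟨j, k, hi, hik, hij, hki⟩

end Patterns

section ModifiedAscentSequences

variable {n : ℕ} {x : Fin n → ℕ}

lemma notMem_ascTops_iff {i : Fin n} :
    i ∉ AscTops x ↔ ∃ j : Fin n, (j : ℕ) + 1 = i ∧ x i ≤ x j := by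
  simp [AscTops]

lemma mem_ascTops_iff_of_succ_eq {i j : Fin n} (hji : (j : ℕ) + 1 = i) :
    i ∈ AscTops x ↔ x j < x i :=
  ⟨fun h => h j hji, fun h j' hj' => (Fin.ext (by omega) : j' = j) ▸ h⟩

lemma IsCayley.one_le (hx : IsCayley x) (i : Fin n) : 1 ≤ x i := by
  obtain ⟨k, -, hk⟩ := hx
  exact (hk ▸ Set.mem_range_self i : x i ∈ Set.Icc 1 k).1

namespace IsModasc

lemma apply_zero (hx : IsModasc x) (h : 0 < n) : x ⟨0, h⟩ = 1 := by
  obtain ⟨i₁, hi₁⟩ : ∃ i, x i = 1 := by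
    obtain ⟨k, -, hk⟩ := hx.1
    have h0 : x ⟨0, h⟩ ∈ Set.Icc 1 k := hk ▸ Set.mem_range_self _
    rw [← Set.mem_range, hk]
    exact ⟨le_rfl, h0.1.trans h0.2⟩
  obtain ⟨i, hi, hmin⟩ := (univ.filter (x · = 1)).exists_min_image id ⟨i₁, by simpa using hi₁⟩
  rw [mem_filter] at hi
  have hasc : i ∈ AscTops x := by
    rw [hx.2]
    intro j hj hxj
    exact (hmin j (by simp [hxj, hi.2])).not_gt hj
  obtain rfl : i = ⟨0, h⟩ := Fin.ext <| show (i : ℕ) = 0 by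
    by_contra hne
    have := hasc ⟨i - 1, by omega⟩ (Nat.sub_add_cancel (Nat.one_le_iff_ne_zero.2 hne))
    have := hx.1.one_le ⟨i - 1, by omega⟩
    omega
  exact hi.2

lemma exists_lt_apply_eq (hx : IsModasc x) {i j : Fin n} (hji : (j : ℕ) + 1 = i)
    (hlt : x i < x j) : ∃ a < i, x a = x i := by
  have hnub : i ∉ Nub x := by
    rw [← hx.2, mem_ascTops_iff_of_succ_eq hji]
    exact hlt.not_gt
  simpa [Nub] using hnub

lemma std_apply_zero (hx : IsModasc x) (h : 0 < n) : Std x ⟨0, h⟩ = 1 := by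
  rw [std_eq_card_lex, card_eq_one]
  refine ⟨⟨0, h⟩, ?_⟩
  ext j
  simp only [mem_filter, mem_univ, true_and, mem_singleton, Prod.Lex.toLex_le_toLex,
    hx.apply_zero h]
  constructor
  · rintro (hlt | ⟨-, hle⟩)
    · exact absurd hlt (hx.1.one_le j).not_gt
    · exact Fin.ext (Nat.le_zero.1 hle)
  · rintro rfl
    exact Or.inr ⟨hx.apply_zero h, le_rfl⟩

lemma not_contains32Dash1_std (hx : IsModasc x) (hav : Avoids x ![2, 2, 1]) :
    ¬ Contains32Dash1 (Std x) := by
  rintro ⟨i, k, hi, hik, h1, h2⟩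
  rw [std_lt_std_iff, Prod.Lex.toLex_lt_toLex] at h1 h2
  have hx1 : x ⟨i + 1, hi⟩ < x i :=
    h1.resolve_right fun h => by simpa [Fin.lt_def] using h.2
  have hx2 : x k < x ⟨i + 1, hi⟩ :=
    h2.resolve_right fun h => absurd (Fin.lt_def.1 h.2) (by dsimp only; omega)
  obtain ⟨a, ha, hxa⟩ := hx.exists_lt_apply_eq rfl hx1
  exact hav (contains_221_iff.2 ⟨a, _, k, ha, Fin.lt_def.2 hik, hxa, hx2⟩)

end IsModasc

lemma IsPrim.exists_pred_gt (hx : IsPrim x) {a b : Fin n} (hab : a < b) (heq : x a = x b) :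
    ∃ j : Fin n, (j : ℕ) + 1 = b ∧ x b < x j := by
  have hasc : b ∉ AscTops x := by
    rw [hx.1.2]
    exact fun hnub => hnub a hab heq
  obtain ⟨j, hjb, hle⟩ := notMem_ascTops_iff.1 hasc
  exact ⟨j, hjb, hle.lt_of_ne (hx.2 j b hjb.symm).symm⟩

lemma IsPrim.contains_221_iff_contains_2321 (hx : IsPrim x) :
    Contains x ![2, 2, 1] ↔ Contains x ![2, 3, 2, 1] := by
  rw [contains_221_iff, contains_2321_iff]
  constructor
  · rintro ⟨a, b, c, hab, hbc, heq, hcb⟩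
    obtain ⟨j, hjb, hbj⟩ := hx.exists_pred_gt hab heq
    have haj : a < j := lt_of_le_of_ne (Fin.le_def.2 (by omega)) (by rintro rfl; omega)
    exact ⟨a, j, b, c, haj, Fin.lt_def.2 (by omega), hbc, heq, heq ▸ hbj, heq ▸ hcb⟩
  · rintro ⟨a, b, c, d, hab, hbc, hcd, hac, -, hda⟩
    exact ⟨a, c, d, hab.trans hbc, hcd, hac, hac ▸ hda⟩

end ModifiedAscentSequences

section Collapse

variable {n : ℕ}

def Glued (p : Fin n → ℕ) (a : ℕ) : Prop :=
  ∃ i j : Fin n, p i = a ∧ p j = a + 1 ∧ i < j ∧ j ∉ AscTops p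

open Classical in
/-- Since `0` is never a value of a permutation, it is never glued, so for `1 ≤ v` this is the
index of the run of glued values containing `v`. -/
noncomputable def blockOf (p : Fin n → ℕ) (v : ℕ) : ℕ :=
  #{a ∈ range v | ¬ Glued p a}

noncomputable def collapse (p : Fin n → ℕ) : Fin n → ℕ :=
  fun i => blockOf p (p i)

variable {p : Fin n → ℕ}

lemma blockOf_zero : blockOf p 0 = 0 := by
  simp [blockOf]

lemma blockOf_succ_of_glued {a : ℕ} (hg : Glued p a) : blockOf p (a + 1) = blockOf p a := by
  unfold blockOf
  rw [range_add_one, filter_insert, if_neg (not_not.2 hg)]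

lemma blockOf_succ_of_not_glued {a : ℕ} (hg : ¬ Glued p a) :
    blockOf p (a + 1) = blockOf p a + 1 := by
  unfold blockOf
  rw [range_add_one, filter_insert, if_pos hg, card_insert_of_notMem (by simp)]

lemma blockOf_mono : Monotone (blockOf p) := by
  classical
  exact fun _ _ h => card_le_card (filter_subset_filter _ (range_subset_range.2 h))

lemma blockOf_le (v : ℕ) : blockOf p v ≤ v := by
  classical
  exact (card_filter_le _ _).trans (card_range v).le

lemma glued_of_blockOf_eq {u v a : ℕ} (hua : u ≤ a) (hav : a < v)
    (h : blockOf p u = blockOf p v) : Glued p a := by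
  by_contra hg
  have h1 : blockOf p u ≤ blockOf p a := blockOf_mono hua
  have h2 : blockOf p (a + 1) ≤ blockOf p v := blockOf_mono hav
  rw [blockOf_succ_of_not_glued hg] at h2
  omega

lemma exists_blockOf_eq {w v : ℕ} (h : w ≤ blockOf p v) : ∃ u ≤ v, blockOf p u = w := by
  induction v with
  | zero => exact ⟨0, le_rfl, by rw [blockOf_zero] at h ⊢; omega⟩
  | succ v ih =>
    by_cases hw : w ≤ blockOf p v
    · obtain ⟨u, hu, rfl⟩ := ih hw
      exact ⟨u, hu.trans v.le_succ, rfl⟩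
    · refine ⟨v + 1, le_rfl, ?_⟩
      by_cases hg : Glued p v
      · rw [blockOf_succ_of_glued hg] at h ⊢
        omega
      · rw [blockOf_succ_of_not_glued hg] at h ⊢
        omega

lemma glued_iff (hp : Function.Injective p) {a : ℕ} {i j : Fin n} (hi : p i = a)
    (hj : p j = a + 1) : Glued p a ↔ i < j ∧ j ∉ AscTops p := by
  refine ⟨?_, fun ⟨hij, hasc⟩ => ⟨i, j, hi, hj, hij, hasc⟩⟩
  rintro ⟨i', j', hi', hj', hij, hasc⟩
  obtain rfl := hp (hi'.trans hi.symm)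
  obtain rfl := hp (hj'.trans hj.symm)
  exact ⟨hij, hasc⟩

lemma add_two_le_of_glued (hp : Function.Injective p) {i j : Fin n} (hj : p j = p i + 1)
    (hg : Glued p (p i)) : (i : ℕ) + 2 ≤ j := by
  obtain ⟨hij, hasc⟩ := (glued_iff hp rfl hj).1 hg
  obtain ⟨k, hkj, hjk⟩ := notMem_ascTops_iff.1 hasc
  have hki : (k : ℕ) ≠ i := fun h => by rw [Fin.ext h] at hjk; omega
  rw [Fin.lt_def] at hij
  omega

variable (hp : IsPerm p)
include hp

lemma not_glued_zero : ¬ Glued p 0 := fun ⟨i, _, hi, _⟩ =>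
  absurd (hp.apply_mem_Icc i).1 (by omega)

lemma one_le_blockOf {v : ℕ} (hv : 1 ≤ v) : 1 ≤ blockOf p v := by
  have h1 : blockOf p 1 = 1 := by
    rw [blockOf_succ_of_not_glued (not_glued_zero hp), blockOf_zero]
  exact h1 ▸ blockOf_mono hv

lemma add_two_le_of_blockOf_eq {i j : Fin n} (hlt : p i < p j)
    (h : blockOf p (p i) = blockOf p (p j)) : (i : ℕ) + 2 ≤ j := by
  obtain ⟨d, hd⟩ := Nat.exists_eq_add_of_lt hlt
  induction d generalizing j with
  | zero => exact add_two_le_of_glued hp.1 hd (glued_of_blockOf_eq le_rfl (by omega) h)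
  | succ d ih =>
    obtain ⟨k, hk⟩ := hp.exists_eq (v := p i + d + 1) (by omega)
      (by have := (hp.apply_mem_Icc j).2; omega)
    have hik : blockOf p (p i) = blockOf p (p k) :=
      le_antisymm (blockOf_mono (by omega)) (h ▸ blockOf_mono (by omega))
    have hki : (i : ℕ) + 2 ≤ k := ih (by omega) hik hk
    have hkj : (k : ℕ) + 2 ≤ j :=
      add_two_le_of_glued hp.1 (by omega) (glued_of_blockOf_eq (by omega) (by omega) h)
    omega

lemma lt_iff_lt_of_collapse_eq {i j : Fin n} (h : collapse p i = collapse p j) :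
    p i < p j ↔ i < j := by
  rw [Fin.lt_def]
  refine ⟨fun hlt => by have := add_two_le_of_blockOf_eq hp hlt h; omega, fun hij => ?_⟩
  rcases lt_trichotomy (p i) (p j) with hlt | heq | hgt
  · exact hlt
  · exact absurd (hp.1 heq) (Fin.ne_of_val_ne hij.ne)
  · have := add_two_le_of_blockOf_eq hp hgt h.symm
    omega

lemma lt_iff_lex_lt_collapse (i j : Fin n) :
    p j < p i ↔ toLex (collapse p j, j) < toLex (collapse p i, i) := by
  rw [Prod.Lex.toLex_lt_toLex]
  constructor
  · intro h
    rcases (blockOf_mono h.le : collapse p j ≤ collapse p i).lt_or_eq with hlt | heq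
    · exact Or.inl hlt
    · exact Or.inr ⟨heq, (lt_iff_lt_of_collapse_eq hp heq).1 h⟩
  · rintro (hlt | ⟨heq, hji⟩)
    · exact blockOf_mono.reflect_lt hlt
    · exact (lt_iff_lt_of_collapse_eq hp heq).2 hji

lemma std_collapse : Std (collapse p) = p :=
  std_eq_of_lt_iff hp (lt_iff_lex_lt_collapse hp)

lemma noFlat_collapse : NoFlat (collapse p) := by
  intro i j hij h
  have hlt := (lt_iff_lt_of_collapse_eq hp h).2 (Fin.lt_def.2 (by omega))
  have := add_two_le_of_blockOf_eq hp hlt h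
  omega

lemma isCayley_collapse : IsCayley (collapse p) := by
  refine ⟨blockOf p n, blockOf_le n, Set.Subset.antisymm ?_ ?_⟩
  · rintro _ ⟨i, rfl⟩
    exact ⟨one_le_blockOf hp (hp.apply_mem_Icc i).1, blockOf_mono (hp.apply_mem_Icc i).2⟩
  · rintro w ⟨hw1, hw⟩
    obtain ⟨v, hv, rfl⟩ := exists_blockOf_eq hw
    have hv1 : 1 ≤ v := Nat.one_le_iff_ne_zero.2 fun h => by
      rw [h, blockOf_zero] at hw1
      omega
    obtain ⟨i, hi⟩ := hp.exists_eq hv1 hv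
    exact ⟨i, by rw [collapse, hi]⟩

lemma mem_nub_collapse_iff {i k : Fin n} (hk : p k + 1 = p i) :
    i ∈ Nub (collapse p) ↔ ¬ Glued p (p k) := by
  constructor
  · intro hnub hg
    have hki := ((glued_iff hp.1 rfl hk.symm).1 hg).1
    refine hnub k hki ?_
    rw [collapse, collapse, ← hk, blockOf_succ_of_glued hg]
  · intro hg j hji heq
    have hlt := (lt_iff_lt_of_collapse_eq hp heq).2 hji
    exact hg (glued_of_blockOf_eq (by omega) (by omega) heq)

lemma glued_iff_collapse_le {i j k : Fin n} (hav : ¬ Contains32Dash1 p)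
    (hji : (j : ℕ) + 1 = i) (hk : p k + 1 = p i) :
    Glued p (p k) ↔ collapse p i ≤ collapse p j := by
  constructor
  · intro hg
    have hasc := ((glued_iff hp.1 rfl hk.symm).1 hg).2
    rw [mem_ascTops_iff_of_succ_eq hji, not_lt] at hasc
    exact blockOf_mono hasc
  · intro hle
    by_contra hg
    rcases lt_or_gt_of_ne (hp.1.ne (Fin.ne_of_val_ne (by omega) : j ≠ i)) with hlt | hgt
    · have : collapse p j ≤ blockOf p (p k) := blockOf_mono (by omega)
      rw [collapse, ← hk, blockOf_succ_of_not_glued hg] at hle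
      omega
    · -- `p k` cannot come before `i` (it would be glued to `p i`), so it is the `1` of a `32-1`
      have hasc : i ∉ AscTops p := by
        rw [mem_ascTops_iff_of_succ_eq hji]
        exact hgt.not_gt
      have hik : i < k := by
        rcases lt_trichotomy i k with hik | rfl | hki
        · exact hik
        · omega
        · exact absurd ((glued_iff hp.1 rfl hk.symm).2 ⟨hki, hasc⟩) hg
      exact hav (contains32Dash1_of hji hik hgt (by omega))

lemma ascTops_collapse (h0 : ∀ h : 0 < n, p ⟨0, h⟩ = 1) (hav : ¬ Contains32Dash1 p) :
    AscTops (collapse p) = Nub (collapse p) := by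
  ext ⟨_ | m, hm⟩
  · exact ⟨fun _ j hj => absurd (Fin.lt_def.1 hj) (Nat.not_lt_zero _),
      fun _ j hj => (Nat.succ_ne_zero _ hj).elim⟩
  · set i : Fin n := ⟨m + 1, hm⟩
    have hpi : 2 ≤ p i := by
      have hne : p i ≠ 1 := fun h => by
        have := hp.1 (h.trans (h0 (by omega)).symm)
        simp [Fin.ext_iff, i] at this
      have := (hp.apply_mem_Icc i).1
      omega
    obtain ⟨k, hk⟩ := hp.exists_eq (v := p i - 1) (by omega)
      (by have := (hp.apply_mem_Icc i).2; omega)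
    have hji : ((⟨m, by omega⟩ : Fin n) : ℕ) + 1 = i := rfl
    rw [mem_ascTops_iff_of_succ_eq hji, mem_nub_collapse_iff hp (by omega : p k + 1 = p i),
      glued_iff_collapse_le hp hav hji (by omega), not_le]

lemma avoids_221_collapse (hav : ¬ Contains32Dash1 p) : Avoids (collapse p) ![2, 2, 1] := by
  rw [Avoids, contains_221_iff]
  rintro ⟨a, b, c, hab, hbc, heq, hcb⟩
  have hpab := (lt_iff_lt_of_collapse_eq hp heq).2 hab
  obtain ⟨k, hk⟩ := hp.exists_eq (v := p b - 1)
    (by have := (hp.apply_mem_Icc a).1; omega) (by have := (hp.apply_mem_Icc b).2; omega)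
  have hg : Glued p (p k) := glued_of_blockOf_eq (by omega) (by omega) heq
  obtain ⟨j, hjb, hbj⟩ :=
    notMem_ascTops_iff.1 ((glued_iff hp.1 (j := b) rfl (by omega)).1 hg).2
  have hpcb : p c < p b := blockOf_mono.reflect_lt hcb
  have hne : p b ≠ p j := hp.1.ne (Fin.ne_of_val_ne (by omega))
  exact hav (contains32Dash1_of hjb hbc (hbj.lt_of_ne hne) hpcb)

end Collapse

/-- `Prim_n(221) = Prim_n(2321)` and
`st(Prim_n(221)) = {p : p_1 = 1, p avoids 32-1}`. -/
theorem prim_221_2321 (n : ℕ) :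
    ({x : Fin n → ℕ | IsPrim x ∧ Avoids x ![2, 2, 1]} =
      {x : Fin n → ℕ | IsPrim x ∧ Avoids x ![2, 3, 2, 1]}) ∧
    (fun x => Std x) '' {x : Fin n → ℕ | IsPrim x ∧ Avoids x ![2, 2, 1]} =
      {p : Fin n → ℕ | IsPerm p ∧ (∀ h : 0 < n, p ⟨0, h⟩ = 1) ∧
        ¬ Contains32Dash1 p} := by
  refine ⟨Set.ext fun x => and_congr_right fun hx =>
    not_congr hx.contains_221_iff_contains_2321, Set.ext fun p => ⟨?_, ?_⟩⟩
  · rintro ⟨x, ⟨hx, hav⟩, rfl⟩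
    exact ⟨isPerm_std x, hx.1.std_apply_zero, hx.1.not_contains32Dash1_std hav⟩
  · rintro ⟨hp, h0, hav⟩
    exact ⟨collapse p, ⟨⟨⟨isCayley_collapse hp, ascTops_collapse hp h0 hav⟩, noFlat_collapse hp⟩,
      avoids_221_collapse hp hav⟩, std_collapse hp⟩
end
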